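/- Let X ∈ ℝ^{M×N} with all entries nonnegative, H ∈ ℝ^{K×N} with all entries positive, and S^t ∈ ℝ^{M×K} with all entries positive. Define ξ_{ijl} = S^t_{il} H_{lj} / (S^t H)_{ij} and f₁(S, S^t) = Σ_{i,j,l} ξ_{ijl} (X_{ij} − S_{il} H_{lj} / ξ_{ijl})². Define the multiplicative update S'_{il} = S^t_{il} (X Hᵀ)_{il} / (S^t H Hᵀ)_{il}. Then S' has nonnegative entries and f₁(S', S^t) ≤ f₁(S, S^t) for every S ∈ ℝ^{M×K} with nonnegative entries, i.e., S' minimizes the auxiliary function f₁(·, S^t) over nonnegative matrices. -/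

import Mathlib

/-!
`f₁(·, Sᵗ)` is separable: the terms containing `S i l` form a weighted one-variable least-squares
problem `∑ j, ξ j * (X i j - s * H l j / ξ j)²`, a quadratic in `s` with leading coefficient
`∑ j, H l j² / ξ j = (Sᵗ H Hᵀ) i l / Sᵗ i l > 0`, whose minimizer `(X Hᵀ) i l / (∑ j, H l j² / ξ j)`
is exactly the multiplicative update. Minimizing each summand separately minimizes the sum.
-/

open Finset Matrix

lemma Matrix.mul_apply_nonneg {m n p R : Type*} [Fintype n] [Semiring R] [PartialOrder R]
    [IsOrderedRing R] {A : Matrix m n R} {B : Matrix n p R}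
    (hA : ∀ i k, 0 ≤ A i k) (hB : ∀ k j, 0 ≤ B k j) (i : m) (j : p) : 0 ≤ (A * B) i j :=
  sum_nonneg fun k _ => mul_nonneg (hA i k) (hB k j)

lemma Matrix.mul_apply_pos {m n p R : Type*} [Fintype n] [Nonempty n] [Semiring R]
    [PartialOrder R] [IsStrictOrderedRing R] {A : Matrix m n R} {B : Matrix n p R} (hA : ∀ i k, 0 < A i k) (hB : ∀ k j, 0 < B k j) (i : m) (j : p) :
    0 < (A * B) i j :=
  sum_pos (fun k _ => mul_pos (hA i k) (hB k j)) univ_nonempty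

lemma Matrix.mul_transpose_apply {m n p R : Type*} [Fintype n] [Mul R] [AddCommMonoid R]
    (A : Matrix m n R) (B : Matrix p n R) (i : m) (l : p) : (A * Bᵀ) i l = ∑ j, A i j * B l j := by
  simp only [mul_apply, transpose_apply]

/-- The side condition handles `Q = 0`, where `B / Q = 0`. -/
lemma div_minimizes_quadratic {Q B : ℝ} (hQ : 0 ≤ Q) (hB : Q = 0 → B = 0) (A t : ℝ) :
    A - 2 * (B / Q) * B + (B / Q) ^ 2 * Q ≤ A - 2 * t * B + t ^ 2 * Q := by
  rcases hQ.eq_or_lt with hQ0 | hQpos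
  · simp [← hQ0, hB hQ0.symm]
  · have gap : (A - 2 * t * B + t ^ 2 * Q) - (A - 2 * (B / Q) * B + (B / Q) ^ 2 * Q)
        = (t * Q - B) ^ 2 / Q := by
      field_simp
      ring
    have := div_nonneg (sq_nonneg (t * Q - B)) hQ
    linarith

lemma weighted_sq_sub_div_eq {w : ℝ} (hw : w ≠ 0) (x y t : ℝ) :
    w * (x - t * y / w) ^ 2 = w * x ^ 2 - 2 * t * (x * y) + t ^ 2 * (y ^ 2 / w) := by
  field_simp
  ring

theorem sum_weighted_sq_sub_div_le {ι : Type*} [Fintype ι] {w : ι → ℝ} (hw : ∀ j, 0 < w j)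
    (x y : ι → ℝ) (t : ℝ) :
    ∑ j, w j * (x j - (∑ k, x k * y k) / (∑ k, y k ^ 2 / w k) * y j / w j) ^ 2 ≤
      ∑ j, w j * (x j - t * y j / w j) ^ 2 := by
  have expand : ∀ s, ∑ j, w j * (x j - s * y j / w j) ^ 2 =
      ∑ j, w j * x j ^ 2 - 2 * s * ∑ j, x j * y j + s ^ 2 * ∑ j, y j ^ 2 / w j := by
    intro s
    simp only [weighted_sq_sub_div_eq (hw _).ne', sum_add_distrib, sum_sub_distrib, ← mul_sum]
  have hQ : 0 ≤ ∑ j, y j ^ 2 / w j := sum_nonneg fun j _ => div_nonneg (sq_nonneg _) (hw j).le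
  have hB : ∑ j, y j ^ 2 / w j = 0 → ∑ j, x j * y j = 0 := by
    intro h0
    have hy : ∀ j, y j = 0 := fun j => by
      have := (sum_eq_zero_iff_of_nonneg fun j _ => div_nonneg (sq_nonneg (y j)) (hw j).le).1
        h0 j (mem_univ j)
      simpa [(hw j).ne'] using this
    simp [hy]
  rw [expand, expand]
  exact div_minimizes_quadratic hQ hB _ t

/-- The Lee–Seung multiplicative update `S' i l = Sᵗ i l * (X * Hᵀ) i l / (Sᵗ * H * Hᵀ) i l`
produces a nonnegative matrix that minimizes the auxiliary function
`f₁(S, Sᵗ) = ∑ i j l, ξ i j l * (X i j - S i l * H l j / ξ i j l)²`,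
with `ξ i j l = Sᵗ i l * H l j / (Sᵗ * H) i j`, over nonnegative matrices `S`. -/
theorem nmf_multiplicative_update_minimizes_auxiliary {M N K : ℕ}
    (X : Matrix (Fin M) (Fin N) ℝ) (hX : ∀ i j, 0 ≤ X i j)
    (H : Matrix (Fin K) (Fin N) ℝ) (hH : ∀ l j, 0 < H l j)
    (St : Matrix (Fin M) (Fin K) ℝ) (hSt : ∀ i l, 0 < St i l)
    (S' : Matrix (Fin M) (Fin K) ℝ)
    (hS' : ∀ i l, S' i l = St i l * (X * Hᵀ) i l / (St * H * Hᵀ) i l) :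
    (∀ i l, 0 ≤ S' i l) ∧
    (∀ S : Matrix (Fin M) (Fin K) ℝ, (∀ i l, 0 ≤ S i l) →
      ∑ i, ∑ j, ∑ l, (St i l * H l j / (St * H) i j) *
          (X i j - S' i l * H l j / (St i l * H l j / (St * H) i j)) ^ 2 ≤
        ∑ i, ∑ j, ∑ l, (St i l * H l j / (St * H) i j) *
          (X i j - S i l * H l j / (St i l * H l j / (St * H) i j)) ^ 2) := by
  have hStH : ∀ i j, 0 ≤ (St * H) i j :=
    mul_apply_nonneg (fun i l => (hSt i l).le) (fun l j => (hH l j).le)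
  refine ⟨fun i l => ?_, fun S _ => ?_⟩
  · rw [hS']
    exact div_nonneg (mul_nonneg (hSt i l).le (mul_apply_nonneg hX (fun j l => (hH l j).le) i l))
      (mul_apply_nonneg hStH (fun j l => (hH l j).le) i l)
  · refine sum_le_sum fun i _ => ?_
    rw [sum_comm]
    conv_rhs => rw [sum_comm]
    refine sum_le_sum fun l _ => ?_
    have : Nonempty (Fin K) := ⟨l⟩
    have hξ : ∀ j, 0 < St i l * H l j / (St * H) i j := fun j =>
      div_pos (mul_pos (hSt i l) (hH l j)) (mul_apply_pos hSt hH i j)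
    have hopt : S' i l = (∑ j, X i j * H l j) / ∑ j, H l j ^ 2 / (St i l * H l j / (St * H) i j) := by
      have hsum : ∑ j, H l j ^ 2 / (St i l * H l j / (St * H) i j)
          = (∑ j, (St * H) i j * H l j) / St i l := by
        rw [sum_div]
        refine sum_congr rfl fun j _ => ?_
        have := (hH l j).ne'
        have := (hSt i l).ne'
        field_simp
      rw [hS', hsum, div_div_eq_mul_div, mul_transpose_apply, mul_transpose_apply, mul_comm]
    rw [hopt]
    exact sum_weighted_sq_sub_div_le hξ _ _ _
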